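/- There exists a positive constant C (depending only on λ) such that for all squares Q ∈ D_m and R ∈ D_n with m < n and R ⊂ Q, one has |S_R − S_Q − S_{Q,R}| ≤ C a_m. -/

import Mathlib

/-!
Let `g(z) = ∫_{K ∖ Q} (z - y)⁻¹ dμ(y)`. Since `μ` lives on `K` and
`K ∖ R = (K ∖ Q) ∪ (K ∩ (Q ∖ R))`, the difference `S_R - S_{Q,R}` is the average of `g` over `R`,
while `S_Q` is its average over `Q`; so `|S_R - S_Q - S_{Q,R}|` is at most the oscillation of `g`
on `Q`. Split `K ∖ Q` into the annuli `K ∩ (Q_k ∖ Q_{k+1})`, `k < m`, between the ancestors of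
`Q`. Because `λ < 1/2`, the k-th annulus stays at distance `≥ (1 - 2λ) s_k` from `Q`, and its mass
is at most `4⁻ᵏ`. So it changes `g` by `≲ s_m 4⁻ᵏ / s_k² ≤ (4λ²)^{m-k} a_m` across `Q`, and the
geometric series gives the bound `C a_m`.
-/

open MeasureTheory Filter Set Topology
open scoped ENNReal

noncomputable section

/-- Side length of generation-`n` squares: `s n = λ₁ ⋯ λₙ` (here `Λ k` is `λ_{k+1}`). -/
def sideLen (Λ : ℕ → ℝ) (n : ℕ) : ℝ := ∏ k ∈ Finset.range n, Λ k

/-- Lower-left corner of the generation-`n` square encoded by the word `w`. -/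
def cornerPt (Λ : ℕ → ℝ) (w : ℕ → Bool × Bool) (n : ℕ) : ℂ :=
  ∑ k ∈ Finset.range n,
    (((if (w k).1 then sideLen Λ k - sideLen Λ (k + 1) else 0 : ℝ) : ℂ) +
      ((if (w k).2 then sideLen Λ k - sideLen Λ (k + 1) else 0 : ℝ) : ℂ) * Complex.I)

/-- The (closed) generation-`n` square encoded by the word `w`. -/
def cSquare (Λ : ℕ → ℝ) (w : ℕ → Bool × Bool) (n : ℕ) : Set ℂ :=
  {z : ℂ | (cornerPt Λ w n).re ≤ z.re ∧ z.re ≤ (cornerPt Λ w n).re + sideLen Λ n ∧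
    (cornerPt Λ w n).im ≤ z.im ∧ z.im ≤ (cornerPt Λ w n).im + sideLen Λ n}

/-- The family `𝒟_n` of generation-`n` squares. -/
def genSq (Λ : ℕ → ℝ) (n : ℕ) : Set (Set ℂ) := {Q | ∃ w, Q = cSquare Λ w n}

/-- The planar Cantor set `K = ⋂ₙ ⋃ⱼ Qⱼⁿ`. -/
def cantorK (Λ : ℕ → ℝ) : Set ℂ := ⋂ n, ⋃ w : ℕ → Bool × Bool, cSquare Λ w n

/-- The linear density `a_n = 4^{-n}/s_n` at generation `n`. -/
def linDensity (Λ : ℕ → ℝ) (n : ℕ) : ℝ := 1 / (4 ^ n * sideLen Λ n)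

/-- `S_Q`: the martingale value at a square `Q`,
`S_Q = μ(Q)⁻¹ ∫_Q ∫_{K ∖ Q} (z-y)⁻¹ dμ(y) dμ(z)`. -/
def SQ (Λ : ℕ → ℝ) (μ : Measure ℂ) (Q : Set ℂ) : ℂ :=
  ⨍ z in Q, ∫ y in cantorK Λ \ Q, (z - y)⁻¹ ∂μ ∂μ

/-- `S_{Q,R}`: the relative martingale started at `Q`, evaluated at `R ⊆ Q`,
`S_{Q,R} = μ(R)⁻¹ ∫_R ∫_{Q ∖ R} (z-y)⁻¹ dμ(y) dμ(z)`. -/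
def Srel (μ : Measure ℂ) (Q R : Set ℂ) : ℂ :=
  ⨍ z in R, ∫ y in Q \ R, (z - y)⁻¹ ∂μ ∂μ

lemma sideLen_succ (Λ : ℕ → ℝ) (n : ℕ) : sideLen Λ (n + 1) = sideLen Λ n * Λ n :=
  Finset.prod_range_succ _ _

section Geometry

variable {Λ : ℕ → ℝ} {lam : ℝ}

lemma sideLen_nonneg (hΛ : ∀ n, 0 ≤ Λ n) (n : ℕ) : 0 ≤ sideLen Λ n :=
  Finset.prod_nonneg fun k _ => hΛ k

lemma sideLen_pos (hΛ : ∀ n, 0 < Λ n) (n : ℕ) : 0 < sideLen Λ n :=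
  Finset.prod_pos fun k _ => hΛ k

lemma sideLen_antitone (hΛ : ∀ n, 0 ≤ Λ n ∧ Λ n ≤ lam) (hlam : lam ≤ 1) :
    Antitone (sideLen Λ) :=
  antitone_nat_of_succ_le fun n => by
    rw [sideLen_succ]
    exact mul_le_of_le_one_right (sideLen_nonneg (fun k => (hΛ k).1) n) ((hΛ n).2.trans hlam)

lemma sideLen_le_pow_mul (hΛ : ∀ n, 0 ≤ Λ n ∧ Λ n ≤ lam) {k m : ℕ} (hkm : k ≤ m) :
    sideLen Λ m ≤ lam ^ (m - k) * sideLen Λ k := by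
  rw [sideLen, sideLen, ← Finset.prod_range_mul_prod_Ico Λ hkm, mul_comm]
  refine mul_le_mul_of_nonneg_right ?_ (sideLen_nonneg (fun n => (hΛ n).1) k)
  calc ∏ i ∈ Finset.Ico k m, Λ i ≤ ∏ _i ∈ Finset.Ico k m, lam :=
        Finset.prod_le_prod (fun i _ => (hΛ i).1) fun i _ => (hΛ i).2
    _ = lam ^ (m - k) := by rw [Finset.prod_const, Nat.card_Ico]

def leftEnd (Λ : ℕ → ℝ) (a : ℕ → Bool) (n : ℕ) : ℝ :=
  ∑ k ∈ Finset.range n, if a k then sideLen Λ k - sideLen Λ (k + 1) else 0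

def cInterval (Λ : ℕ → ℝ) (a : ℕ → Bool) (n : ℕ) : Set ℝ :=
  Icc (leftEnd Λ a n) (leftEnd Λ a n + sideLen Λ n)

lemma leftEnd_succ (a : ℕ → Bool) (n : ℕ) :
    leftEnd Λ a (n + 1) =
      leftEnd Λ a n + if a n then sideLen Λ n - sideLen Λ (n + 1) else 0 :=
  Finset.sum_range_succ _ _

lemma leftEnd_congr {a b : ℕ → Bool} {n : ℕ} (h : ∀ i < n, a i = b i) :
    leftEnd Λ a n = leftEnd Λ b n :=
  Finset.sum_congr rfl fun i hi => by rw [h i (Finset.mem_range.1 hi)]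

lemma cInterval_antitone (hs : Antitone (sideLen Λ)) (a : ℕ → Bool) :
    Antitone (cInterval Λ a) :=
  antitone_nat_of_succ_le fun n => by
    have := hs n.le_succ
    apply Icc_subset_Icc <;> rw [leftEnd_succ] <;> split_ifs <;> linarith

lemma le_abs_sub_of_mem_cInterval (hs : Antitone (sideLen Λ)) {a b : ℕ → Bool} {j n : ℕ}
    (hjn : j < n) (hagree : ∀ i < j, a i = b i) (hne : a j ≠ b j) {x y : ℝ}
    (hx : x ∈ cInterval Λ a n) (hy : y ∈ cInterval Λ b n) :
    sideLen Λ j - 2 * sideLen Λ (j + 1) ≤ |x - y| := by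
  obtain ⟨hx₁, hx₂⟩ := cInterval_antitone hs a hjn hx
  obtain ⟨hy₁, hy₂⟩ := cInterval_antitone hs b hjn hy
  rw [leftEnd_succ, leftEnd_congr hagree] at hx₁ hx₂
  rw [leftEnd_succ] at hy₁ hy₂
  rw [Bool.eq_not_of_ne hne.symm] at hy₁ hy₂
  cases ha : a j
  · simp only [ha, Bool.false_eq_true, Bool.not_false, ite_true, ite_false] at hx₁ hx₂ hy₁ hy₂
    exact le_abs.2 (Or.inr (by linarith))
  · simp only [ha, Bool.not_true, Bool.false_eq_true, ite_true, ite_false] at hx₁ hx₂ hy₁ hy₂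
    exact le_abs.2 (Or.inl (by linarith))

lemma cSquare_eq_reProdIm (w : ℕ → Bool × Bool) (n : ℕ) :
    cSquare Λ w n = cInterval Λ (fun k => (w k).1) n ×ℂ cInterval Λ (fun k => (w k).2) n := by
  ext z
  simp [cSquare, cInterval, Complex.mem_reProdIm, leftEnd, cornerPt, Complex.re_sum,
    Complex.im_sum, and_assoc]

lemma cSquare_antitone (hs : Antitone (sideLen Λ)) (w : ℕ → Bool × Bool) :
    Antitone (cSquare Λ w) := fun k n hkn z hz => by
  rw [cSquare_eq_reProdIm, Complex.mem_reProdIm] at hz ⊢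
  exact ⟨cInterval_antitone hs _ hkn hz.1, cInterval_antitone hs _ hkn hz.2⟩

lemma cSquare_congr {w w' : ℕ → Bool × Bool} {n : ℕ} (h : ∀ i < n, w i = w' i) :
    cSquare Λ w n = cSquare Λ w' n := by
  have h₁ : leftEnd Λ (fun k => (w k).1) n = leftEnd Λ (fun k => (w' k).1) n :=
    leftEnd_congr fun i hi => congrArg Prod.fst (h i hi)
  have h₂ : leftEnd Λ (fun k => (w k).2) n = leftEnd Λ (fun k => (w' k).2) n :=
    leftEnd_congr fun i hi => congrArg Prod.snd (h i hi)
  simp only [cSquare_eq_reProdIm, cInterval, h₁, h₂]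

lemma exists_mem_cSquare_of_mem_cantorK {y : ℂ} (hy : y ∈ cantorK Λ) (n : ℕ) :
    ∃ w, y ∈ cSquare Λ w n :=
  mem_iUnion.1 (mem_iInter.1 hy n)

lemma cantorK_subset_cSquare_zero (w : ℕ → Bool × Bool) : cantorK Λ ⊆ cSquare Λ w 0 :=
  fun _ hy => by
    obtain ⟨w', hw'⟩ := exists_mem_cSquare_of_mem_cantorK hy 0
    rwa [cSquare_congr fun i hi => absurd hi (Nat.not_lt_zero i)]

end Geometry

section Separation

variable {Λ : ℕ → ℝ} {lam : ℝ}

lemma le_norm_sub_of_mem_cSquare (hs : Antitone (sideLen Λ)) {w w' : ℕ → Bool × Bool}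
    {j n : ℕ} (hjn : j < n) (hagree : ∀ i < j, w i = w' i) (hne : w j ≠ w' j) {z y : ℂ}
    (hz : z ∈ cSquare Λ w n) (hy : y ∈ cSquare Λ w' n) :
    sideLen Λ j - 2 * sideLen Λ (j + 1) ≤ ‖z - y‖ := by
  rw [cSquare_eq_reProdIm, Complex.mem_reProdIm] at hz hy
  rcases not_and_or.1 (mt Prod.ext_iff.2 hne) with h | h
  · calc _ ≤ |z.re - y.re| := le_abs_sub_of_mem_cInterval hs hjn
          (fun i hi => congrArg Prod.fst (hagree i hi)) h hz.1 hy.1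
      _ ≤ ‖z - y‖ := by rw [← Complex.sub_re]; exact Complex.abs_re_le_norm _
  · calc _ ≤ |z.im - y.im| := le_abs_sub_of_mem_cInterval hs hjn
          (fun i hi => congrArg Prod.snd (hagree i hi)) h hz.2 hy.2
      _ ≤ ‖z - y‖ := by rw [← Complex.sub_im]; exact Complex.abs_im_le_norm _

/-- A point of `K` outside `Q_{k+1}(w)` lies in a generation-`(k+1)` square whose word first
differs from `w` at some `j ≤ k`; two such squares are `s_j - 2 s_{j+1} ≥ (1 - 2λ) s_j` apart. -/
lemma le_norm_sub_of_notMem_cSquare_succ (hΛ : ∀ n, 0 ≤ Λ n ∧ Λ n ≤ lam) (hlam : lam ≤ 1 / 2)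
    {w : ℕ → Bool × Bool} {k : ℕ} {z y : ℂ} (hz : z ∈ cSquare Λ w (k + 1))
    (hy : y ∈ cantorK Λ) (hyQ : y ∉ cSquare Λ w (k + 1)) :
    (1 - 2 * lam) * sideLen Λ k ≤ ‖z - y‖ := by
  classical
  have hs : Antitone (sideLen Λ) := sideLen_antitone hΛ (by linarith)
  obtain ⟨w', hy'⟩ := exists_mem_cSquare_of_mem_cantorK hy (k + 1)
  have hex : ∃ j, w j ≠ w' j := by
    by_contra! h
    exact hyQ (cSquare_congr (fun i _ => h i) ▸ hy')
  obtain ⟨j, hne, hagree⟩ : ∃ j, w j ≠ w' j ∧ ∀ i < j, w i = w' i :=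
    ⟨Nat.find hex, Nat.find_spec hex, fun i hi => not_not.1 (Nat.find_min hex hi)⟩
  have hjk : j ≤ k := by
    by_contra! hkj
    exact hyQ ((cSquare_congr (n := k + 1) fun i hi => hagree i (by omega)) ▸ hy')
  have hsucc : sideLen Λ (j + 1) ≤ lam * sideLen Λ j := by
    simpa using sideLen_le_pow_mul hΛ j.le_succ
  calc (1 - 2 * lam) * sideLen Λ k ≤ (1 - 2 * lam) * sideLen Λ j :=
        mul_le_mul_of_nonneg_left (hs hjk) (by linarith)
    _ ≤ sideLen Λ j - 2 * sideLen Λ (j + 1) := by linarith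
    _ ≤ ‖z - y‖ := le_norm_sub_of_mem_cSquare hs (Nat.lt_succ_of_le hjk) hagree hne hz hy'

lemma le_norm_sub_of_mem_cantorK_diff (hΛ : ∀ n, 0 ≤ Λ n ∧ Λ n ≤ lam) (hlam : lam ≤ 1 / 2)
    {w : ℕ → Bool × Bool} {n : ℕ} {z y : ℂ} (hz : z ∈ cSquare Λ w n)
    (hy : y ∈ cantorK Λ \ cSquare Λ w n) :
    (1 - 2 * lam) * sideLen Λ n ≤ ‖z - y‖ := by
  cases n with
  | zero => exact absurd (cantorK_subset_cSquare_zero w hy.1) hy.2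
  | succ k =>
    have hs : Antitone (sideLen Λ) := sideLen_antitone hΛ (by linarith)
    calc (1 - 2 * lam) * sideLen Λ (k + 1) ≤ (1 - 2 * lam) * sideLen Λ k :=
          mul_le_mul_of_nonneg_left (hs k.le_succ) (by linarith)
      _ ≤ ‖z - y‖ := le_norm_sub_of_notMem_cSquare_succ hΛ hlam hz hy.1 hy.2

end Separation

lemma norm_sub_le_of_mem_cSquare {Λ : ℕ → ℝ} {w : ℕ → Bool × Bool} {n : ℕ} {z z' : ℂ}
    (hz : z ∈ cSquare Λ w n) (hz' : z' ∈ cSquare Λ w n) :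
    ‖z - z'‖ ≤ 2 * sideLen Λ n := by
  rw [cSquare_eq_reProdIm, Complex.mem_reProdIm] at hz hz'
  calc ‖z - z'‖ ≤ |z.re - z'.re| + |z.im - z'.im| := by
        simpa using Complex.norm_le_abs_re_add_abs_im (z - z')
    _ ≤ sideLen Λ n + sideLen Λ n := by
        rw [← Real.dist_eq, ← Real.dist_eq]
        gcongr
        · simpa using Real.dist_le_of_mem_Icc hz.1 hz'.1
        · simpa using Real.dist_le_of_mem_Icc hz.2 hz'.2
    _ = 2 * sideLen Λ n := by ring

lemma measurableSet_cSquare (Λ : ℕ → ℝ) (w : ℕ → Bool × Bool) (n : ℕ) :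
    MeasurableSet (cSquare Λ w n) := by
  rw [cSquare_eq_reProdIm]
  exact (isClosed_Icc.reProdIm isClosed_Icc).measurableSet

lemma finite_range_cSquare (Λ : ℕ → ℝ) (n : ℕ) : (range fun w => cSquare Λ w n).Finite := by
  refine (finite_range fun v : Fin n → Bool × Bool =>
    cSquare Λ (fun k => if h : k < n then v ⟨k, h⟩ else (false, false)) n).subset ?_
  rintro _ ⟨w, rfl⟩
  exact ⟨fun i => w i, cSquare_congr fun i hi => by simp [hi]⟩

lemma measurableSet_cantorK (Λ : ℕ → ℝ) : MeasurableSet (cantorK Λ) :=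
  MeasurableSet.iInter fun n => by
    rw [← sUnion_range]
    exact (finite_range_cSquare Λ n).measurableSet_sUnion
      (forall_mem_range.2 fun w => measurableSet_cSquare Λ w n)

section Annuli

variable {Λ : ℕ → ℝ}

def annulus (Λ : ℕ → ℝ) (w : ℕ → Bool × Bool) (k : ℕ) : Set ℂ :=
  cantorK Λ ∩ (cSquare Λ w k \ cSquare Λ w (k + 1))

lemma measurableSet_annulus (w : ℕ → Bool × Bool) (k : ℕ) : MeasurableSet (annulus Λ w k) :=
  (measurableSet_cantorK Λ).inter ((measurableSet_cSquare Λ w k).diff (measurableSet_cSquare Λ w _))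

lemma cantorK_diff_cSquare_eq_biUnion_annulus (hs : Antitone (sideLen Λ))
    (w : ℕ → Bool × Bool) (m : ℕ) :
    cantorK Λ \ cSquare Λ w m = ⋃ k ∈ Finset.range m, annulus Λ w k := by
  induction m with
  | zero =>
    simpa [sdiff_eq_empty] using cantorK_subset_cSquare_zero w
  | succ m ih =>
    rw [Finset.range_add_one, Finset.set_biUnion_insert, ← ih]
    have hsub : cSquare Λ w (m + 1) ⊆ cSquare Λ w m := cSquare_antitone hs w m.le_succ
    ext y
    have := @hsub y
    simp only [annulus, Set.mem_sdiff, mem_union, mem_inter_iff]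
    tauto

lemma pairwise_disjoint_annulus (hs : Antitone (sideLen Λ)) (w : ℕ → Bool × Bool) :
    Pairwise (Function.onFun Disjoint (annulus Λ w)) := by
  have key : ∀ i j, i < j → Disjoint (annulus Λ w i) (annulus Λ w j) := fun i j hij =>
    disjoint_left.2 fun _ hi hj => hi.2.2 (cSquare_antitone hs w hij hj.2.1)
  intro i j hij
  rcases hij.lt_or_gt with h | h
  · exact key i j h
  · exact (key j i h).symm

end Annuli

lemma sum_range_pow_sub_le {r : ℝ} (h0 : 0 ≤ r) (h1 : r < 1) (m : ℕ) :
    ∑ k ∈ Finset.range m, r ^ (m - k) ≤ (1 - r)⁻¹ :=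
  calc ∑ k ∈ Finset.range m, r ^ (m - k) ≤ ∑ k ∈ Finset.range m, r ^ (m - 1 - k) :=
        Finset.sum_le_sum fun k _ => pow_le_pow_of_le_one h0 h1.le (by omega)
    _ = ∑ k ∈ Finset.range m, r ^ k := Finset.sum_range_reflect (r ^ ·) m
    _ ≤ (1 - r)⁻¹ := by
        have := geom_sum_Ico_le_of_lt_one (m := 0) (n := m) h0 h1
        rwa [← Finset.range_eq_Ico, pow_zero, one_div] at this

lemma norm_inv_sub_inv_le {𝕜 : Type*} [NormedDivisionRing 𝕜] {a b : 𝕜} {d : ℝ} (hd : 0 < d)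
    (ha : d ≤ ‖a‖) (hb : d ≤ ‖b‖) : ‖a⁻¹ - b⁻¹‖ ≤ ‖a - b‖ / d ^ 2 := by
  have ha0 : a ≠ 0 := norm_pos_iff.1 (hd.trans_le ha)
  have hb0 : b ≠ 0 := norm_pos_iff.1 (hd.trans_le hb)
  rw [← dist_eq_norm, dist_inv_inv₀ ha0 hb0, dist_eq_norm, sq]
  gcongr

lemma norm_setIntegral_biUnion_le {ι α E : Type*} [MeasurableSpace α] [NormedAddCommGroup E]
    [NormedSpace ℝ E] {μ : Measure α} [IsFiniteMeasure μ] {f : α → E} (t : Finset ι)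
    {A : ι → Set α} (hA : ∀ i ∈ t, MeasurableSet (A i)) (hdisj : Pairwise (Function.onFun Disjoint A))
    (hf : IntegrableOn f (⋃ i ∈ t, A i) μ) {b : ι → ℝ} (hb : ∀ i ∈ t, ∀ x ∈ A i, ‖f x‖ ≤ b i) :
    ‖∫ x in ⋃ i ∈ t, A i, f x ∂μ‖ ≤ ∑ i ∈ t, b i * μ.real (A i) := by
  rw [integral_biUnion_finset t hA (hdisj.set_pairwise _)
    fun i hi => hf.mono_set (Finset.subset_set_biUnion_of_mem hi)]
  exact (norm_sum_le _ _).trans <| Finset.sum_le_sum fun i hi =>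
    norm_setIntegral_le_of_norm_le_const (measure_lt_top μ _) (hb i hi)

open Metric in
/-- Averaging preserves membership in the closed (convex) balls of radius `C`. -/
lemma norm_setAverage_sub_setAverage_le {α E : Type*} [MeasurableSpace α]
    [NormedAddCommGroup E] [NormedSpace ℝ E] [CompleteSpace E] {μ : Measure α} {R Q : Set α}
    {g : α → E} {C : ℝ} (hRQ : R ⊆ Q) (hR : MeasurableSet R) (hQ : MeasurableSet Q)
    (hR0 : μ R ≠ 0) (hQ_top : μ Q ≠ ∞) (hg : IntegrableOn g Q μ)
    (hC : ∀ z ∈ R, ∀ z' ∈ Q, ‖g z - g z'‖ ≤ C) :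
    ‖⨍ z in R, g z ∂μ - ⨍ z in Q, g z ∂μ‖ ≤ C := by
  have havg_Q : ∀ z ∈ R, ⨍ z' in Q, g z' ∂μ ∈ closedBall (g z) C := fun z hz =>
    (convex_closedBall _ _).set_average_mem isClosed_closedBall
      (fun h => hR0 (measure_mono_null hRQ h)) hQ_top
      (ae_restrict_of_forall_mem hQ fun z' hz' => by
        rw [mem_closedBall, dist_comm, dist_eq_norm]; exact hC z hz z' hz') hg
  rw [← dist_eq_norm, ← mem_closedBall]
  exact (convex_closedBall _ _).set_average_mem isClosed_closedBall hR0
    (measure_ne_top_of_subset hRQ hQ_top)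
    (ae_restrict_of_forall_mem hR fun z hz => mem_closedBall_comm.1 (havg_Q z hz))
    (hg.mono_set hRQ)

def cauchyPotential (μ : Measure ℂ) (s : Set ℂ) (z : ℂ) : ℂ :=
  ∫ y in s, (z - y)⁻¹ ∂μ

section CauchyPotential

variable {μ : Measure ℂ} {s t : Set ℂ} {z : ℂ} {d : ℝ}

lemma stronglyMeasurable_cauchyPotential [SFinite μ] (s : Set ℂ) :
    StronglyMeasurable (cauchyPotential μ s) :=
  (measurable_fst.sub measurable_snd).inv.stronglyMeasurable.integral_prod_right'
    (f := fun p : ℂ × ℂ => (p.1 - p.2)⁻¹) (ν := μ.restrict s)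

lemma norm_inv_sub_le (hd : 0 < d) {y : ℂ} (h : d ≤ ‖z - y‖) : ‖(z - y)⁻¹‖ ≤ d⁻¹ := by
  rw [norm_inv]
  exact inv_anti₀ hd h

lemma integrableOn_inv_sub [IsFiniteMeasure μ] (hs : MeasurableSet s) (hd : 0 < d)
    (h : ∀ y ∈ s, d ≤ ‖z - y‖) : IntegrableOn (fun y => (z - y)⁻¹) s μ :=
  Integrable.mono' (integrable_const d⁻¹)
    (measurable_const.sub measurable_id).inv.aestronglyMeasurable
    (ae_restrict_of_forall_mem hs fun y hy => norm_inv_sub_le hd (h y hy))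

lemma norm_cauchyPotential_le [IsFiniteMeasure μ] (hd : 0 < d) (h : ∀ y ∈ s, d ≤ ‖z - y‖) :
    ‖cauchyPotential μ s z‖ ≤ d⁻¹ * μ.real s :=
  norm_setIntegral_le_of_norm_le_const (measure_lt_top μ s) fun y hy => norm_inv_sub_le hd (h y hy)

lemma integrableOn_cauchyPotential [IsFiniteMeasure μ] (ht : MeasurableSet t) (hd : 0 < d)
    (h : ∀ z ∈ t, ∀ y ∈ s, d ≤ ‖z - y‖) : IntegrableOn (cauchyPotential μ s) t μ :=
  Integrable.mono' (integrable_const (d⁻¹ * μ.real s))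
    (stronglyMeasurable_cauchyPotential s).aestronglyMeasurable
    (ae_restrict_of_forall_mem ht fun z hz => norm_cauchyPotential_le hd (h z hz))

end CauchyPotential

lemma sideLen_div_sq_mul_le {Λ : ℕ → ℝ} {lam : ℝ} (hΛ : ∀ n, 0 < Λ n ∧ Λ n ≤ lam) {k m : ℕ}
    (hkm : k ≤ m) :
    sideLen Λ m / sideLen Λ k ^ 2 * (4 : ℝ)⁻¹ ^ k ≤ (4 * lam ^ 2) ^ (m - k) * linDensity Λ m := by
  have hle := sideLen_le_pow_mul (fun n => ⟨(hΛ n).1.le, (hΛ n).2⟩) hkm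
  have hsm := sideLen_pos (fun n => (hΛ n).1) m
  have hsk := sideLen_pos (fun n => (hΛ n).1) k
  obtain ⟨j, rfl⟩ := Nat.exists_eq_add_of_le hkm
  rw [Nat.add_sub_cancel_left] at hle ⊢
  have hdiff : (4 * lam ^ 2) ^ j * linDensity Λ (k + j) - sideLen Λ (k + j) / sideLen Λ k ^ 2 *
      (4 : ℝ)⁻¹ ^ k = ((lam ^ j * sideLen Λ k) ^ 2 - sideLen Λ (k + j) ^ 2) /
        (4 ^ k * sideLen Λ (k + j) * sideLen Λ k ^ 2) := by
    rw [linDensity, inv_pow]; field_simp; ring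
  rw [← sub_nonneg, hdiff]
  exact div_nonneg (sub_nonneg.2 (pow_le_pow_left₀ hsm.le hle 2)) (by positivity)

section Oscillation

variable {Λ : ℕ → ℝ} {lam : ℝ} {μ : Measure ℂ}

lemma measureReal_annulus_le [IsFiniteMeasure μ]
    (hμQ : ∀ w n, μ (cSquare Λ w n) ≤ (4 : ℝ≥0∞)⁻¹ ^ n) (w : ℕ → Bool × Bool) (k : ℕ) :
    μ.real (annulus Λ w k) ≤ (4 : ℝ)⁻¹ ^ k :=
  calc μ.real (annulus Λ w k) ≤ μ.real (cSquare Λ w k) := measureReal_mono fun _ hy => hy.2.1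
    _ ≤ ((4 : ℝ≥0∞)⁻¹ ^ k).toReal := ENNReal.toReal_mono (by simp) (hμQ w k)
    _ = (4 : ℝ)⁻¹ ^ k := by simp

lemma norm_inv_sub_sub_inv_sub_le_of_mem_annulus (hΛ : ∀ n, 0 < Λ n ∧ Λ n ≤ lam)
    (hlam : lam < 1 / 2) {w : ℕ → Bool × Bool} {k m : ℕ} (hkm : k < m) {z z' y : ℂ}
    (hz : z ∈ cSquare Λ w m) (hz' : z' ∈ cSquare Λ w m) (hy : y ∈ annulus Λ w k) :
    ‖(z - y)⁻¹ - (z' - y)⁻¹‖ ≤ 2 * sideLen Λ m / ((1 - 2 * lam) * sideLen Λ k) ^ 2 := by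
  have hΛ' : ∀ n, 0 ≤ Λ n ∧ Λ n ≤ lam := fun n => ⟨(hΛ n).1.le, (hΛ n).2⟩
  have hs : Antitone (sideLen Λ) := sideLen_antitone hΛ' (by linarith)
  have hd : 0 < (1 - 2 * lam) * sideLen Λ k :=
    mul_pos (by linarith) (sideLen_pos (fun n => (hΛ n).1) k)
  calc ‖(z - y)⁻¹ - (z' - y)⁻¹‖ ≤ ‖(z - y) - (z' - y)‖ / ((1 - 2 * lam) * sideLen Λ k) ^ 2 :=
        norm_inv_sub_inv_le hd
          (le_norm_sub_of_notMem_cSquare_succ hΛ' hlam.le (cSquare_antitone hs w hkm hz) hy.1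
            hy.2.2)
          (le_norm_sub_of_notMem_cSquare_succ hΛ' hlam.le (cSquare_antitone hs w hkm hz') hy.1
            hy.2.2)
    _ ≤ 2 * sideLen Λ m / ((1 - 2 * lam) * sideLen Λ k) ^ 2 := by
        rw [sub_sub_sub_cancel_right]
        gcongr
        exact norm_sub_le_of_mem_cSquare hz hz'

lemma div_sq_mul_measureReal_annulus_le (hΛ : ∀ n, 0 < Λ n ∧ Λ n ≤ lam) [IsFiniteMeasure μ]
    (hμQ : ∀ w n, μ (cSquare Λ w n) ≤ (4 : ℝ≥0∞)⁻¹ ^ n) (w : ℕ → Bool × Bool) {k m : ℕ}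
    (hkm : k ≤ m) :
    2 * sideLen Λ m / ((1 - 2 * lam) * sideLen Λ k) ^ 2 * μ.real (annulus Λ w k) ≤
      2 / (1 - 2 * lam) ^ 2 * linDensity Λ m * (4 * lam ^ 2) ^ (m - k) :=
  calc _ ≤ 2 * sideLen Λ m / ((1 - 2 * lam) * sideLen Λ k) ^ 2 * (4 : ℝ)⁻¹ ^ k :=
        mul_le_mul_of_nonneg_left (measureReal_annulus_le hμQ w k)
          (div_nonneg (by linarith [sideLen_pos (fun n => (hΛ n).1) m]) (sq_nonneg _))
    _ = 2 / (1 - 2 * lam) ^ 2 * (sideLen Λ m / sideLen Λ k ^ 2 * (4 : ℝ)⁻¹ ^ k) := by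
        rw [mul_pow, ← div_div]; ring
    _ ≤ 2 / (1 - 2 * lam) ^ 2 * ((4 * lam ^ 2) ^ (m - k) * linDensity Λ m) :=
        mul_le_mul_of_nonneg_left (sideLen_div_sq_mul_le hΛ hkm) (by positivity)
    _ = _ := by ring

lemma norm_cauchyPotential_sub_le (hΛ : ∀ n, 0 < Λ n ∧ Λ n ≤ lam) (hlam : lam < 1 / 2)
    [IsFiniteMeasure μ] (hμQ : ∀ w n, μ (cSquare Λ w n) ≤ (4 : ℝ≥0∞)⁻¹ ^ n)
    {w : ℕ → Bool × Bool} {m : ℕ} {z z' : ℂ} (hz : z ∈ cSquare Λ w m)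
    (hz' : z' ∈ cSquare Λ w m) :
    ‖cauchyPotential μ (cantorK Λ \ cSquare Λ w m) z -
        cauchyPotential μ (cantorK Λ \ cSquare Λ w m) z'‖ ≤
      2 / ((1 - 2 * lam) ^ 2 * (1 - 4 * lam ^ 2)) * linDensity Λ m := by
  have hΛ' : ∀ n, 0 ≤ Λ n ∧ Λ n ≤ lam := fun n => ⟨(hΛ n).1.le, (hΛ n).2⟩
  have hs : Antitone (sideLen Λ) := sideLen_antitone hΛ' (by linarith)
  have hs_pos : ∀ k, 0 < sideLen Λ k := sideLen_pos fun n => (hΛ n).1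
  have hint : ∀ v ∈ cSquare Λ w m,
      IntegrableOn (fun y => (v - y)⁻¹) (cantorK Λ \ cSquare Λ w m) μ := fun v hv =>
    integrableOn_inv_sub ((measurableSet_cantorK Λ).diff (measurableSet_cSquare Λ w m))
      (mul_pos (by linarith) (hs_pos m))
      fun y hy => le_norm_sub_of_mem_cantorK_diff hΛ' hlam.le hv hy
  have hq : 4 * lam ^ 2 < 1 := by nlinarith [(hΛ 0).1, (hΛ 0).2]
  have ha : 0 ≤ linDensity Λ m := by rw [linDensity]; have := hs_pos m; positivity
  rw [cauchyPotential, cauchyPotential, ← integral_sub (hint z hz) (hint z' hz')]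
  rw [cantorK_diff_cSquare_eq_biUnion_annulus hs] at hint ⊢
  calc _ ≤ ∑ k ∈ Finset.range m,
        2 * sideLen Λ m / ((1 - 2 * lam) * sideLen Λ k) ^ 2 * μ.real (annulus Λ w k) :=
        norm_setIntegral_biUnion_le _ (fun k _ => measurableSet_annulus w k)
          (pairwise_disjoint_annulus hs w) ((hint z hz).sub (hint z' hz'))
          fun k hk _ hy => norm_inv_sub_sub_inv_sub_le_of_mem_annulus hΛ hlam
            (Finset.mem_range.1 hk) hz hz' hy
    _ ≤ ∑ k ∈ Finset.range m, 2 / (1 - 2 * lam) ^ 2 * linDensity Λ m * (4 * lam ^ 2) ^ (m - k) :=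
        Finset.sum_le_sum fun k hk =>
          div_sq_mul_measureReal_annulus_le hΛ hμQ w (Finset.mem_range.1 hk).le
    _ = 2 / (1 - 2 * lam) ^ 2 * linDensity Λ m * ∑ k ∈ Finset.range m, (4 * lam ^ 2) ^ (m - k) :=
        (Finset.mul_sum _ _ _).symm
    _ ≤ 2 / (1 - 2 * lam) ^ 2 * linDensity Λ m * (1 - 4 * lam ^ 2)⁻¹ := by
        gcongr
        exact sum_range_pow_sub_le (by positivity) hq m
    _ = _ := by field_simp

end Oscillation

lemma setAverage_cauchyPotential_sub {μ : Measure ℂ} [IsFiniteMeasure μ] {K Q R : Set ℂ}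
    {d : ℝ} (hK : μ.restrict K = μ) (hRQ : R ⊆ Q) (hKm : MeasurableSet K)
    (hQm : MeasurableSet Q) (hRm : MeasurableSet R) (hd : 0 < d)
    (hsep : ∀ z ∈ R, ∀ y ∈ K \ R, d ≤ ‖z - y‖) :
    ⨍ z in R, cauchyPotential μ (K \ R) z ∂μ - ⨍ z in R, cauchyPotential μ (Q \ R) z ∂μ =
      ⨍ z in R, cauchyPotential μ (K \ Q) z ∂μ := by
  have hQR : cauchyPotential μ (Q \ R) = cauchyPotential μ ((Q \ R) ∩ K) := by
    ext z
    rw [cauchyPotential, cauchyPotential, ← Measure.restrict_restrict (hQm.diff hRm), hK]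
  have hsub : (Q \ R) ∩ K ⊆ K \ R := fun y hy => ⟨hy.2, hy.1.2⟩
  have hsplit : ∀ z ∈ R, cauchyPotential μ (K \ R) z - cauchyPotential μ ((Q \ R) ∩ K) z =
      cauchyPotential μ (K \ Q) z := fun z hz => by
    have hint := integrableOn_inv_sub (μ := μ) (hKm.diff hRm) hd (hsep z hz)
    have hunion : K \ R = (K \ Q) ∪ ((Q \ R) ∩ K) := by
      ext y
      have := @hRQ y
      simp only [Set.mem_sdiff, mem_union, mem_inter_iff]
      tauto
    rw [sub_eq_iff_eq_add, cauchyPotential, hunion,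
      setIntegral_union (disjoint_left.2 fun y hy hy' => hy.2 hy'.1.1) ((hQm.diff hRm).inter hKm)
        (hint.mono_set (sdiff_subset_sdiff_right hRQ)) (hint.mono_set hsub)]
    rfl
  rw [hQR, setAverage_eq, setAverage_eq, ← smul_sub,
    ← integral_sub (integrableOn_cauchyPotential hRm hd hsep)
      (integrableOn_cauchyPotential hRm hd fun z hz y hy => hsep z hz y (hsub hy)),
    setIntegral_congr_fun hRm hsplit, setAverage_eq]

/-- `|S_R - S_Q - S_{Q,R}| ≤ C a_m` for squares `R ⊆ Q` with `Q ∈ 𝒟_m`, `R ∈ 𝒟_n`, `m < n`. -/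
theorem relative_martingale_bound (Λ : ℕ → ℝ) (lam : ℝ) (hlam : lam < 1 / 2)
    (hΛ : ∀ n, 1 / 4 ≤ Λ n ∧ Λ n ≤ lam)
    (μ : Measure ℂ) [IsProbabilityMeasure μ]
    (hμK : μ (cantorK Λ) = 1)
    (hμQ : ∀ (w : ℕ → Bool × Bool) (n : ℕ), μ (cSquare Λ w n) = (4 : ℝ≥0∞)⁻¹ ^ n) :
    ∃ C : ℝ, 0 < C ∧ ∀ (m n : ℕ), m < n → ∀ Q ∈ genSq Λ m, ∀ R ∈ genSq Λ n, R ⊆ Q →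
      ‖SQ Λ μ R - SQ Λ μ Q - Srel μ Q R‖ ≤ C * linDensity Λ m := by
  have hΛ' : ∀ n, 0 < Λ n ∧ Λ n ≤ lam := fun n => ⟨by linarith [(hΛ n).1], (hΛ n).2⟩
  have hδ : 0 < 1 - 2 * lam := by linarith
  have hK : μ.restrict (cantorK Λ) = μ := Measure.restrict_eq_self_of_ae_mem <|
    (ae_mem_iff_measure_eq (measurableSet_cantorK Λ).nullMeasurableSet).2 (by simp [hμK])
  refine ⟨2 / ((1 - 2 * lam) ^ 2 * (1 - 4 * lam ^ 2)),
    div_pos two_pos (mul_pos (pow_pos hδ 2) (by nlinarith [(hΛ 0).1, (hΛ 0).2])), ?_⟩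
  rintro m n - _ ⟨w, rfl⟩ _ ⟨w', rfl⟩ hRQ
  have hsep : ∀ (v : ℕ → Bool × Bool) k, ∀ z ∈ cSquare Λ v k, ∀ y ∈ cantorK Λ \ cSquare Λ v k,
      (1 - 2 * lam) * sideLen Λ k ≤ ‖z - y‖ := fun v k z hz y hy =>
    le_norm_sub_of_mem_cantorK_diff (fun n => ⟨(hΛ' n).1.le, (hΛ' n).2⟩) hlam.le hz hy
  have hd : ∀ k, 0 < (1 - 2 * lam) * sideLen Λ k :=
    fun k => mul_pos hδ (sideLen_pos (fun n => (hΛ' n).1) k)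
  have hsplit : SQ Λ μ (cSquare Λ w' n) - Srel μ (cSquare Λ w m) (cSquare Λ w' n) =
      ⨍ z in cSquare Λ w' n, cauchyPotential μ (cantorK Λ \ cSquare Λ w m) z ∂μ :=
    setAverage_cauchyPotential_sub hK hRQ (measurableSet_cantorK Λ)
      (measurableSet_cSquare Λ w m) (measurableSet_cSquare Λ w' n) (hd n) (hsep w' n)
  rw [sub_right_comm, hsplit]
  exact norm_setAverage_sub_setAverage_le hRQ (measurableSet_cSquare Λ w' n)
    (measurableSet_cSquare Λ w m) (by simp [hμQ]) (measure_ne_top μ _)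
    (integrableOn_cauchyPotential (measurableSet_cSquare Λ w m) (hd m) (hsep w m))
    fun z hz z' hz' => norm_cauchyPotential_sub_le hΛ' hlam (fun v k => (hμQ v k).le) (hRQ hz) hz'
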